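/- Let D ∈ ℝ^{m×p} be a frame with lower frame bound A > 0, i.e., A‖u‖₂² ≤ ‖Dᵀu‖₂² for all u ∈ ℝ^m. Then C'(D) ≤ √(p/A). If in addition 1 ≤ k ≤ p and δ̲_k(D) < 1, then C(D) ≤ (2/A)·(p/√k)·(1 + δ̄_k(D))/√(1 − δ̲_k(D)). -/

import Mathlib

open MeasureTheory Matrix Finset
open scoped ENNReal NNReal

noncomputable section

/-- squared ℓ² norm of a vector -/
def l2sq {n : Type*} [Fintype n] (v : n → ℝ) : ℝ := ∑ i, v i ^ 2

/-- ℓ² norm of a vector -/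
def l2 {n : Type*} [Fintype n] (v : n → ℝ) : ℝ := Real.sqrt (l2sq v)

/-- ℓ¹ norm of a vector -/
def l1 {n : Type*} [Fintype n] (v : n → ℝ) : ℝ := ∑ i, |v i|

/-- ℓ^∞ (sup) norm of a vector -/
def linf {n : Type*} (v : n → ℝ) : ℝ := sSup (Set.range fun i => |v i|)

/-- squared Frobenius norm -/
def frobSq {n q : Type*} [Fintype n] [Fintype q] (A : Matrix n q ℝ) : ℝ :=
  ∑ i, ∑ j, A i j ^ 2

/-- Frobenius norm -/
def frob {n q : Type*} [Fintype n] [Fintype q] (A : Matrix n q ℝ) : ℝ :=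
  Real.sqrt (frobSq A)

/-- spectral (operator ℓ²→ℓ²) norm -/
def spec {n q : Type*} [Fintype n] [Fintype q] (A : Matrix n q ℝ) : ℝ :=
  sSup {t : ℝ | ∃ x : q → ℝ, l2 x ≤ 1 ∧ t = l2 (A.mulVec x)}

/-- operator ℓ∞→ℓ∞ norm: max row sum of absolute values -/
def opInf {n q : Type*} [Fintype q] (A : Matrix n q ℝ) : ℝ :=
  sSup (Set.range fun i => ∑ j, |A i j|)

/-- j-th column of a matrix -/
def col {m p : ℕ} (D : Matrix (Fin m) (Fin p) ℝ) (j : Fin p) : Fin m → ℝ :=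
  fun i => D i j

/-- the oblique manifold: matrices with unit ℓ²-norm columns -/
def Oblique {m p : ℕ} (D : Matrix (Fin m) (Fin p) ℝ) : Prop :=
  ∀ j, l2sq (_root_.col D j) = 1

/-- cumulative coherence μ_k -/
def mu {m p : ℕ} (k : ℕ) (D : Matrix (Fin m) (Fin p) ℝ) : ℝ :=
  sSup {t : ℝ | ∃ J : Finset (Fin p), J.card ≤ k ∧ ∃ j, j ∉ J ∧
    t = ∑ i ∈ J, |∑ r, D r i * D r j|}

/-- lower restricted isometry constant δ̲_k -/
def deltaLow {m p : ℕ} (k : ℕ) (D : Matrix (Fin m) (Fin p) ℝ) : ℝ :=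
  sInf {δ : ℝ | 0 ≤ δ ∧ ∀ J : Finset (Fin p), J.card = k →
    ∀ z : Fin p → ℝ, (∀ i, i ∉ J → z i = 0) →
      (1 - δ) * l2sq z ≤ l2sq (D.mulVec z)}

/-- upper restricted isometry constant δ̄_k -/
def deltaUp {m p : ℕ} (k : ℕ) (D : Matrix (Fin m) (Fin p) ℝ) : ℝ :=
  sInf {δ : ℝ | 0 ≤ δ ∧ ∀ J : Finset (Fin p), J.card = k →
    ∀ z : Fin p → ℝ, (∀ i, i ∉ J → z i = 0) →
      l2sq (D.mulVec z) ≤ (1 + δ) * l2sq z}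

/-- submatrix D_J of the columns indexed by J -/
def colsub {m p : ℕ} (D : Matrix (Fin m) (Fin p) ℝ) (J : Finset (Fin p)) :
    Matrix (Fin m) J ℝ := fun i j => D i j.1

/-- Gram matrix D_Jᵀ D_J -/
def gram {m p : ℕ} (D : Matrix (Fin m) (Fin p) ℝ) (J : Finset (Fin p)) :
    Matrix J J ℝ := (colsub D J)ᵀ * colsub D J

/-- Θ_J(D) = (D_Jᵀ D_J)⁻¹ -/
def theta {m p : ℕ} (D : Matrix (Fin m) (Fin p) ℝ) (J : Finset (Fin p)) :
    Matrix J J ℝ := (gram D J)⁻¹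

/-- pseudo-inverse D_J⁺ = Θ_J D_Jᵀ -/
def pinv {m p : ℕ} (D : Matrix (Fin m) (Fin p) ℝ) (J : Finset (Fin p)) :
    Matrix J (Fin m) ℝ := theta D J * (colsub D J)ᵀ

/-- orthogonal projector P_J(D) = D_J Θ_J D_Jᵀ -/
def proj {m p : ℕ} (D : Matrix (Fin m) (Fin p) ℝ) (J : Finset (Fin p)) :
    Matrix (Fin m) (Fin m) ℝ := colsub D J * pinv D J

/-- Lasso objective L_x(D, α) -/
def lasso {m p : ℕ} (lam : ℝ) (x : Fin m → ℝ) (D : Matrix (Fin m) (Fin p) ℝ)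
    (a : Fin p → ℝ) : ℝ :=
  (1/2) * l2sq (fun i => x i - D.mulVec a i) + lam * l1 a

/-- f_x(D) = inf_α L_x(D, α) -/
def fobj {m p : ℕ} (lam : ℝ) (x : Fin m → ℝ) (D : Matrix (Fin m) (Fin p) ℝ) : ℝ :=
  ⨅ a : Fin p → ℝ, lasso lam x D a

/-- φ_x(D|s) for a sign vector s with support J -/
def phi {m p : ℕ} (lam : ℝ) (x : Fin m → ℝ) (D : Matrix (Fin m) (Fin p) ℝ)
    (J : Finset (Fin p)) (s : Fin p → ℝ) : ℝ :=
  (1/2) * (l2sq x - ∑ a : J, ∑ b : J,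
    ((colsub D J)ᵀ.mulVec x a - lam * s a.1) * theta D J a b
      * ((colsub D J)ᵀ.mulVec x b - lam * s b.1))

/-- α̂_x(D|s): the closed-form candidate minimizer with sign pattern s and support J -/
def alphaHat {m p : ℕ} (lam : ℝ) (x : Fin m → ℝ) (D : Matrix (Fin m) (Fin p) ℝ)
    (J : Finset (Fin p)) (s : Fin p → ℝ) : Fin p → ℝ :=
  fun i => if h : i ∈ J then
    (pinv D J).mulVec x ⟨i, h⟩ - lam * (theta D J).mulVec (fun a => s a.1) ⟨i, h⟩
  else 0

/-- sign vector of a coefficient vector -/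
def sgnv {p : ℕ} (a : Fin p → ℝ) : Fin p → ℝ := fun i => Real.sign (a i)

/-- the noisy signal x = D° α° + ε -/
def xsig {m p : ℕ} (Do : Matrix (Fin m) (Fin p) ℝ) (a : Fin p → ℝ) (e : Fin m → ℝ) :
    Fin m → ℝ := fun i => Do.mulVec a i + e i

/-- average over all subsets J ⊆ {1,…,p} of size k -/
def EJ {p : ℕ} (k : ℕ) (f : Finset (Fin p) → ℝ) : ℝ :=
  ((p.choose k : ℝ))⁻¹ * ∑ S ∈ Finset.powersetCard k (Finset.univ : Finset (Fin p)), f S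

/-- the constant C_min -/
def CminV {m p : ℕ} (k : ℕ) (Do : Matrix (Fin m) (Fin p) ℝ) (Ea2 Ea1 : ℝ) : ℝ :=
  24 * (Ea1 / Real.sqrt Ea2) ^ 2 * (spec Do + 1) * ((k : ℝ) / (p : ℝ)) *
    frob (Doᵀ * Do - (1 : Matrix (Fin p) (Fin p) ℝ))

/-- the constant C_max -/
def CmaxV {m p : ℕ} (k : ℕ) (Do : Matrix (Fin m) (Fin p) ℝ) (Ea1 Malpha : ℝ) : ℝ :=
  (2/7) * (Ea1 / Malpha) * (1 - 2 * mu k Do)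

/-- The Basic signal model (Assumption 1 together with the generative mechanism):
J is uniform over size-k supports, α° is supported on J with white coefficients and signs,
and the noise is decorrelated from the coefficients and white.  Conditional expectations given
J are expressed as integrals over the events {J = S}. -/
structure IsBasicModel {m p : ℕ} (k : ℕ) {Ω : Type*} [MeasurableSpace Ω] (μ : Measure Ω)
    (Jv : Ω → Finset (Fin p)) (av : Ω → Fin p → ℝ) (ev : Ω → Fin m → ℝ)
    (Ea2 Ea1 Ee2 : ℝ) : Prop where
  prob : IsProbabilityMeasure μ
  measJ : ∀ S : Finset (Fin p), MeasurableSet {ω | Jv ω = S}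
  measa : ∀ i, Measurable fun ω => av ω i
  mease : ∀ i, Measurable fun ω => ev ω i
  Ea2_pos : 0 < Ea2
  Ea1_pos : 0 < Ea1
  unif : ∀ S : Finset (Fin p), S.card = k →
    μ {ω | Jv ω = S} = ((p.choose k : ℝ≥0∞))⁻¹
  support : ∀ᵐ ω ∂μ, ∀ i, i ∉ Jv ω → av ω i = 0
  coeffWhite : ∀ S : Finset (Fin p), S.card = k → ∀ i ∈ S, ∀ j ∈ S,
    ∫ ω in {ω | Jv ω = S}, av ω i * av ω j ∂μ
      = (if i = j then Ea2 else 0) * (μ {ω | Jv ω = S}).toReal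
  signWhite : ∀ S : Finset (Fin p), S.card = k → ∀ i ∈ S, ∀ j ∈ S,
    ∫ ω in {ω | Jv ω = S}, Real.sign (av ω i) * Real.sign (av ω j) ∂μ
      = (if i = j then 1 else 0) * (μ {ω | Jv ω = S}).toReal
  coeffSign : ∀ S : Finset (Fin p), S.card = k → ∀ i ∈ S, ∀ j ∈ S,
    ∫ ω in {ω | Jv ω = S}, av ω i * Real.sign (av ω j) ∂μ
      = (if i = j then Ea1 else 0) * (μ {ω | Jv ω = S}).toReal
  noiseCoeff : ∀ S : Finset (Fin p), S.card = k → ∀ i : Fin m, ∀ j ∈ S,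
    ∫ ω in {ω | Jv ω = S}, ev ω i * av ω j ∂μ = 0
  noiseSign : ∀ S : Finset (Fin p), S.card = k → ∀ i : Fin m, ∀ j ∈ S,
    ∫ ω in {ω | Jv ω = S}, ev ω i * Real.sign (av ω j) ∂μ = 0
  noiseWhite : ∀ S : Finset (Fin p), S.card = k → ∀ i j : Fin m,
    ∫ ω in {ω | Jv ω = S}, ev ω i * ev ω j ∂μ
      = (if i = j then Ee2 else 0) * (μ {ω | Jv ω = S}).toReal

/-- The Bounded signal model (Assumption 2): almost sure lower bound on nonzero coefficients,
and almost sure ℓ² bounds on the coefficient vector and the noise. -/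
structure IsBoundedModel {m p : ℕ} {Ω : Type*} [MeasurableSpace Ω] (μ : Measure Ω)
    (Jv : Ω → Finset (Fin p)) (av : Ω → Fin p → ℝ) (ev : Ω → Fin m → ℝ)
    (alphaMin Malpha Meps : ℝ) : Prop where
  alphaMin_pos : 0 < alphaMin
  Malpha_pos : 0 < Malpha
  coeffFloor : ∀ᵐ ω ∂μ, ∀ i ∈ Jv ω, alphaMin ≤ |av ω i|
  coeffBound : ∀ᵐ ω ∂μ, l2 (av ω) ≤ Malpha
  noiseBound : ∀ᵐ ω ∂μ, l2 (ev ω) ≤ Meps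

end
/-- C(D) = sup over nonzero u in the column span of D of inf{‖β‖₁ : Dβ = u}/‖u‖₂ -/
noncomputable def Cc {m p : ℕ} (D : Matrix (Fin m) (Fin p) ℝ) : ℝ :=
  sSup {t : ℝ | ∃ u : Fin m → ℝ, u ≠ 0 ∧ (∃ β : Fin p → ℝ, D.mulVec β = u) ∧
    t = (sInf {c : ℝ | ∃ β : Fin p → ℝ, D.mulVec β = u ∧ c = l1 β}) / l2 u}

/-- C'(D) = sup over nonzero u of ‖u‖₂/‖Dᵀu‖_∞ -/
noncomputable def Cp {m p : ℕ} (D : Matrix (Fin m) (Fin p) ℝ) : ℝ :=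
  sSup {t : ℝ | ∃ u : Fin m → ℝ, u ≠ 0 ∧ t = l2 u / linf (Dᵀ.mulVec u)}

/-!
A lower frame bound `A` makes `D Dᵀ` invertible, and the minimum-norm solution
`β = Dᵀ (D Dᵀ)⁻¹ u` of `D β = u` satisfies `A ‖β‖₂² ≤ ‖u‖₂²`; together with `‖β‖₁ ≤ √p ‖β‖₂`
this gives `C(D) ≤ √(p/A)`, while `C'(D) ≤ √(p/A)` follows from `‖Dᵀu‖₂² ≤ p ‖Dᵀu‖_∞²`.
The restricted-isometry bound on `C(D)` is weaker than `√(p/A)`: `δ̲_k < 1` makes any `k`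
columns linearly independent, so `k ≤ m`, and summing the frame inequality over the standard
basis of `ℝ^m` and the upper RIP inequality over that of `ℝ^p` gives
`A k ≤ A m ≤ ‖D‖_F² ≤ p (1 + δ̄_k)`.
-/

section Norms

variable {n : Type*}

lemma linf_nonneg (v : n → ℝ) : 0 ≤ linf v :=
  Real.sSup_nonneg (by rintro _ ⟨i, rfl⟩; exact abs_nonneg (v i))

variable [Fintype n]

lemma l2sq_nonneg (v : n → ℝ) : 0 ≤ l2sq v :=
  Finset.sum_nonneg fun i _ => sq_nonneg (v i)

lemma l2_nonneg (v : n → ℝ) : 0 ≤ l2 v :=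
  Real.sqrt_nonneg _

lemma sq_l2 (v : n → ℝ) : l2 v ^ 2 = l2sq v :=
  Real.sq_sqrt (l2sq_nonneg v)

lemma l2sq_pos {v : n → ℝ} (hv : v ≠ 0) : 0 < l2sq v := by
  obtain ⟨i, hi⟩ := Function.ne_iff.mp hv
  replace hi : v i ≠ 0 := hi
  have hvi : 0 < v i ^ 2 := by positivity
  exact hvi.trans_le
    (Finset.single_le_sum (fun j _ => sq_nonneg (v j)) (Finset.mem_univ i))

lemma l2sq_eq_dotProduct_self (v : n → ℝ) : l2sq v = v ⬝ᵥ v := by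
  simp only [l2sq, dotProduct, sq]

lemma dotProduct_le_l2_mul_l2 (u v : n → ℝ) : u ⬝ᵥ v ≤ l2 u * l2 v := by
  rw [l2, l2, ← Real.sqrt_mul (l2sq_nonneg u)]
  exact Real.le_sqrt_of_sq_le (Finset.sum_mul_sq_le_sq_mul_sq Finset.univ u v)

lemma l1_le_sqrt_card_mul_l2sq (v : n → ℝ) :
    l1 v ≤ √(Fintype.card n * l2sq v) := by
  have h := Finset.sum_mul_sq_le_sq_mul_sq Finset.univ (fun i => |v i|) fun _ => (1 : ℝ)
  simp only [mul_one, one_pow, Finset.sum_const, Finset.card_univ, nsmul_eq_mul, sq_abs] at h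
  exact Real.le_sqrt_of_sq_le (by rw [mul_comm]; exact h)

lemma abs_le_linf (v : n → ℝ) (i : n) : |v i| ≤ linf v :=
  le_csSup (Set.finite_range _).bddAbove ⟨i, rfl⟩

lemma l2sq_le_card_mul_linf_sq (v : n → ℝ) : l2sq v ≤ Fintype.card n * linf v ^ 2 := by
  rw [← nsmul_eq_mul]
  refine Finset.sum_le_card_nsmul _ _ _ fun i _ => ?_
  rw [← sq_abs]
  exact pow_le_pow_left₀ (abs_nonneg _) (abs_le_linf v i) 2

end Norms

lemma le_csInf_mul {S : Set ℝ} (hS : S.Nonempty) {a c : ℝ} (hc : 0 ≤ c)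
    (h : ∀ δ ∈ S, a ≤ δ * c) : a ≤ sInf S * c := by
  rcases hc.eq_or_lt with rfl | hc
  · obtain ⟨δ, hδ⟩ := hS
    simpa using h δ hδ
  · exact (div_le_iff₀ hc).mp (le_csInf hS fun δ hδ => (div_le_iff₀ hc).mpr (h δ hδ))

section Frame

variable {m p : ℕ} (D : Matrix (Fin m) (Fin p) ℝ) {A : ℝ}

theorem Cp_le_sqrt_div (hA : 0 < A) (hframe : ∀ u : Fin m → ℝ, A * l2sq u ≤ l2sq (Dᵀ *ᵥ u)) :
    Cp D ≤ √(p / A) := by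
  refine Real.sSup_le ?_ (Real.sqrt_nonneg _)
  rintro _ ⟨u, -, rfl⟩
  -- `div_le_of_le_mul₀` also covers `linf (Dᵀ *ᵥ u) = 0`, where the quotient is `0`.
  refine div_le_of_le_mul₀ (linf_nonneg _) (Real.sqrt_nonneg _) ?_
  have hu : l2sq u ≤ p / A * linf (Dᵀ *ᵥ u) ^ 2 := by
    rw [div_mul_eq_mul_div, le_div_iff₀ hA, mul_comm]
    simpa using (hframe u).trans (l2sq_le_card_mul_linf_sq (Dᵀ *ᵥ u))
  calc l2 u ≤ √(p / A * linf (Dᵀ *ᵥ u) ^ 2) := Real.sqrt_le_sqrt hu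
    _ = √(p / A) * linf (Dᵀ *ᵥ u) := by
      rw [Real.sqrt_mul' _ (sq_nonneg _), Real.sqrt_sq (linf_nonneg _)]

lemma dotProduct_mul_transpose_mulVec (v : Fin m → ℝ) :
    v ⬝ᵥ (D * Dᵀ) *ᵥ v = l2sq (Dᵀ *ᵥ v) := by
  rw [l2sq_eq_dotProduct_self, ← mulVec_mulVec, dotProduct_mulVec, ← mulVec_transpose]

lemma exists_mulVec_eq_of_frame (hA : 0 < A)
    (hframe : ∀ u : Fin m → ℝ, A * l2sq u ≤ l2sq (Dᵀ *ᵥ u)) (u : Fin m → ℝ) :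
    ∃ β, D *ᵥ β = u ∧ A * l2sq β ≤ l2sq u := by
  have hunit : IsUnit (D * Dᵀ) := by
    refine mulVec_injective_iff_isUnit.mp <|
      (injective_iff_map_eq_zero (D * Dᵀ).mulVecLin).mpr fun v hv => ?_
    by_contra hv0
    have h := hframe v
    rw [← dotProduct_mul_transpose_mulVec, ← mulVecLin_apply, hv, dotProduct_zero] at h
    nlinarith [l2sq_pos hv0]
  obtain ⟨v, hv⟩ := mulVec_surjective_iff_isUnit.mpr hunit u
  refine ⟨Dᵀ *ᵥ v, by rw [mulVec_mulVec, hv], ?_⟩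
  have hβ : l2sq (Dᵀ *ᵥ v) = v ⬝ᵥ u := by rw [← dotProduct_mul_transpose_mulVec, hv]
  have hv2 : A * l2 v ^ 2 ≤ v ⬝ᵥ u := hβ ▸ sq_l2 v ▸ hframe v
  have hcs := dotProduct_le_l2_mul_l2 v u
  have hAv : A * l2 v ≤ l2 u := by
    by_contra! h
    have hv0 : 0 < l2 v := by nlinarith [l2_nonneg u]
    nlinarith [mul_lt_mul_of_pos_left h hv0]
  rw [hβ, ← sq_l2 u]
  nlinarith [mul_le_mul_of_nonneg_right hAv (l2_nonneg u)]

theorem Cc_le_sqrt_div (hA : 0 < A) (hframe : ∀ u : Fin m → ℝ, A * l2sq u ≤ l2sq (Dᵀ *ᵥ u)) :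
    Cc D ≤ √(p / A) := by
  refine Real.sSup_le ?_ (Real.sqrt_nonneg _)
  rintro _ ⟨u, -, -, rfl⟩
  obtain ⟨β, hβu, hβ⟩ := exists_mulVec_eq_of_frame D hA hframe u
  refine div_le_of_le_mul₀ (l2_nonneg u) (Real.sqrt_nonneg _) ?_
  have hl1 : BddBelow {c : ℝ | ∃ β : Fin p → ℝ, D *ᵥ β = u ∧ c = l1 β} :=
    ⟨0, by rintro _ ⟨β, -, rfl⟩; exact Finset.sum_nonneg fun i _ => abs_nonneg (β i)⟩
  calc sInf {c : ℝ | ∃ β : Fin p → ℝ, D *ᵥ β = u ∧ c = l1 β} ≤ l1 β := csInf_le hl1 ⟨β, hβu, rfl⟩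
    _ ≤ √(p * l2sq β) := by simpa using l1_le_sqrt_card_mul_l2sq β
    _ ≤ √(p / A * l2sq u) := by
      refine Real.sqrt_le_sqrt ?_
      rw [div_mul_eq_mul_div, le_div_iff₀ hA, mul_assoc]
      exact mul_le_mul_of_nonneg_left (by linarith) (Nat.cast_nonneg p)
    _ = √(p / A) * l2 u := Real.sqrt_mul (by positivity) _

end Frame

section RestrictedIsometry

variable {m p : ℕ} (D : Matrix (Fin m) (Fin p) ℝ) {k : ℕ}

lemma frobSq_nonneg : 0 ≤ frobSq D :=
  Finset.sum_nonneg fun i _ => l2sq_nonneg (D i)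

lemma l2sq_mulVec_le_frobSq_mul (z : Fin p → ℝ) : l2sq (D *ᵥ z) ≤ frobSq D * l2sq z := by
  simp only [l2sq, frobSq, mulVec, dotProduct]
  rw [Finset.sum_mul]
  exact Finset.sum_le_sum fun i _ => Finset.sum_mul_sq_le_sq_mul_sq _ _ _

lemma frobSq_eq_sum_l2sq_row : frobSq D = ∑ i, l2sq (D i) :=
  rfl

lemma frobSq_eq_sum_l2sq_col : frobSq D = ∑ j, l2sq fun i => D i j :=
  Finset.sum_comm

lemma deltaUp_nonneg : 0 ≤ deltaUp k D :=
  Real.sInf_nonneg fun _ hδ => hδ.1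

lemma deltaLow_nonneg : 0 ≤ deltaLow k D :=
  Real.sInf_nonneg fun _ hδ => hδ.1

lemma l2sq_mulVec_le_one_add_deltaUp {J : Finset (Fin p)} (hJ : J.card = k) {z : Fin p → ℝ}
    (hz : ∀ i, i ∉ J → z i = 0) : l2sq (D *ᵥ z) ≤ (1 + deltaUp k D) * l2sq z := by
  have hS : {δ : ℝ | 0 ≤ δ ∧ ∀ J : Finset (Fin p), J.card = k →
      ∀ z : Fin p → ℝ, (∀ i, i ∉ J → z i = 0) → l2sq (D *ᵥ z) ≤ (1 + δ) * l2sq z}.Nonempty :=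
    ⟨frobSq D, frobSq_nonneg D, fun _ _ z _ => by
      nlinarith [l2sq_mulVec_le_frobSq_mul D z, l2sq_nonneg z]⟩
  have h : l2sq (D *ᵥ z) - l2sq z ≤ deltaUp k D * l2sq z :=
    le_csInf_mul hS (l2sq_nonneg z) fun δ hδ => by linarith [hδ.2 J hJ z hz]
  linarith

lemma l2sq_col_le_one_add_deltaUp (hk : 1 ≤ k) (hkp : k ≤ p) (j : Fin p) :
    l2sq (fun i => D i j) ≤ 1 + deltaUp k D := by
  obtain ⟨J, hjJ, -, hJ⟩ := Finset.exists_subsuperset_card_eq (Finset.subset_univ {j})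
    (by simpa using hk) (by simpa using hkp)
  have h := l2sq_mulVec_le_one_add_deltaUp D hJ (z := Pi.single j 1) fun i hi =>
    Pi.single_eq_of_ne (fun hij => hi (hjJ (by simp [hij]))) 1
  simpa [l2sq, Pi.single_apply] using h

lemma frobSq_le_mul_one_add_deltaUp (hk : 1 ≤ k) (hkp : k ≤ p) :
    frobSq D ≤ p * (1 + deltaUp k D) := by
  rw [frobSq_eq_sum_l2sq_col]
  simpa only [Finset.card_univ, Fintype.card_fin, nsmul_eq_mul] using
    Finset.sum_le_card_nsmul Finset.univ _ _ fun j _ => l2sq_col_le_one_add_deltaUp D hk hkp j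

lemma exists_ne_zero_supported_mulVec_eq_zero {J : Finset (Fin p)} (hJ : m < J.card) :
    ∃ z : Fin p → ℝ, z ≠ 0 ∧ (∀ i, i ∉ J → z i = 0) ∧ D *ᵥ z = 0 := by
  have hdep : ¬ LinearIndependent ℝ fun j : J => fun i => D i j := fun h =>
    hJ.not_ge (by simpa using h.fintype_card_le_finrank)
  obtain ⟨g, hg, j, hj⟩ := Fintype.not_linearIndependent_iff.mp hdep
  have hsupp (i : Fin p) (hi : i ∉ J) : Subtype.val.extend g 0 i = 0 :=
    Function.extend_apply' _ _ _ fun ⟨a, ha⟩ => hi (ha ▸ a.2)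
  refine ⟨Subtype.val.extend g 0, fun h => hj ?_, hsupp, ?_⟩
  · simpa [Subtype.val_injective.extend_apply] using congrFun h j
  · ext r
    have hr := congrFun hg r
    simp only [Finset.sum_apply, Pi.smul_apply, smul_eq_mul, Pi.zero_apply] at hr
    rw [mulVec, dotProduct, Pi.zero_apply, ← Finset.sum_subset (Finset.subset_univ J)
      fun i _ hi => by rw [hsupp i hi, mul_zero], ← Finset.sum_coe_sort J]
    simpa [Subtype.val_injective.extend_apply, mul_comm] using hr

lemma le_of_deltaLow_lt_one (hkp : k ≤ p) (hlow : deltaLow k D < 1) : k ≤ m := by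
  by_contra! hmk
  refine hlow.not_ge (le_csInf ⟨1, zero_le_one, fun _ _ z _ => ?_⟩ fun δ hδ => ?_)
  · simpa using l2sq_nonneg (D *ᵥ z)
  · obtain ⟨J, -, hJ⟩ := Finset.exists_subset_card_eq
      (show k ≤ (Finset.univ : Finset (Fin p)).card by simpa using hkp)
    obtain ⟨z, hz0, hzJ, hDz⟩ := exists_ne_zero_supported_mulVec_eq_zero D (hJ ▸ hmk)
    have h := hδ.2 J hJ z hzJ
    rw [hDz, show l2sq (0 : Fin m → ℝ) = 0 by simp [l2sq]] at h
    nlinarith [l2sq_pos hz0]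

lemma mul_le_frobSq_of_frame {A : ℝ} (hframe : ∀ u : Fin m → ℝ, A * l2sq u ≤ l2sq (Dᵀ *ᵥ u)) :
    A * m ≤ frobSq D := by
  have hrow (i : Fin m) : A ≤ l2sq (D i) := by
    simpa [l2sq, Pi.single_apply] using hframe (Pi.single i 1)
  rw [frobSq_eq_sum_l2sq_row]
  simpa [mul_comm] using Finset.card_nsmul_le_sum Finset.univ _ _ fun i _ => hrow i

end RestrictedIsometry

lemma sqrt_div_le_of_mul_le {A p k δU δL : ℝ} (hA : 0 < A) (hk : 0 < k) (hδU : 0 ≤ δU)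
    (hδL : 0 ≤ δL) (hδL1 : δL < 1) (h : A * k ≤ p * (1 + δU)) :
    √(p / A) ≤ (2 / A) * (p / √k) * (1 + δU) / √(1 - δL) := by
  have hp : 0 < p := by nlinarith
  rw [Real.sqrt_le_iff]
  refine ⟨by positivity, ?_⟩
  have hL : 0 < 1 - δL := by linarith
  simp only [div_pow, mul_pow, Real.sq_sqrt hk.le, Real.sq_sqrt hL.le]
  field_simp
  calc A * k * (1 - δL) ≤ A * k := mul_le_of_le_one_right (mul_pos hA hk).le (by linarith)
    _ ≤ p * (1 + δU) := h
    _ ≤ p * 2 ^ 2 * (1 + δU) ^ 2 := by nlinarith [mul_nonneg hp.le hδU]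

/-- Lemma: for a frame D with lower frame bound A, C'(D) ≤ √(p/A); if moreover δ̲_k(D) < 1 then
C(D) ≤ (2/A)·(p/√k)·(1+δ̄_k(D))/√(1−δ̲_k(D)). -/
theorem stmt17 {m p : ℕ} (D : Matrix (Fin m) (Fin p) ℝ) (A : ℝ) (hA : 0 < A)
    (hframe : ∀ u : Fin m → ℝ, A * l2sq u ≤ l2sq (Dᵀ.mulVec u)) :
    Cp D ≤ Real.sqrt ((p : ℝ) / A) ∧
    ∀ k : ℕ, 1 ≤ k → k ≤ p → deltaLow k D < 1 →
      Cc D ≤ (2 / A) * ((p : ℝ) / Real.sqrt k) * (1 + deltaUp k D)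
              / Real.sqrt (1 - deltaLow k D) := by
  refine ⟨Cp_le_sqrt_div D hA hframe, fun k hk hkp hlow => ?_⟩
  have hAk : A * k ≤ p * (1 + deltaUp k D) :=
    calc A * k ≤ A * m := by gcongr; exact_mod_cast le_of_deltaLow_lt_one D hkp hlow
      _ ≤ frobSq D := mul_le_frobSq_of_frame D hframe
      _ ≤ p * (1 + deltaUp k D) := frobSq_le_mul_one_add_deltaUp D hk hkp
  exact (Cc_le_sqrt_div D hA hframe).trans <| sqrt_div_le_of_mul_le hA (by exact_mod_cast hk)
    (deltaUp_nonneg D) (deltaLow_nonneg D) hlow hAk
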